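/- Let n ∈ ℕ, let f : ℝ → ℝ be (n+1)-times continuously differentiable, fix α ∈ ℝ, and define the remainder R_n(α,x) = ∫_α^x f(λ) dλ − Σ_{k=0}^n c_{n,k} (x−α)^{k+1} [f^{(k)}(α) + (−1)^k f^{(k)}(x)]. Then the derivative of R_n with respect to x equals −Σ_{k=0}^n c_{n,k}(k+1)(x−α)^k [f^{(k)}(α) + (−1)^{k+1}·((n+1)/(n−k+1))·f^{(k)}(x)] + c_{n,n}(−1)^{n+1}(x−α)^{n+1} f^{(n+1)}(x). -/

import Mathlib

/-!
Differentiating `R` termwise gives `f x` minus a sum whose terms involve the derivatives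
`f^{(k+1)}(x)`. With the weights `w_{n,k} = c_{n,k} (k+1) (2n-k+2)/(n-k+1)` one has
`w_{n,0} = 1` and `w_{n,k+1} = c_{n,k}`, so the terms in `f^{(k+1)}(x)`, `k < n`, telescope
against the terms in `f^{(k)}(x)` and absorb `f x`; only the top term `k = n` survives.
-/

open Real intervalIntegral

/-- Spline coefficients `c_{n,k}`. -/
noncomputable def c (n k : ℕ) : ℝ :=
  ((Nat.factorial n : ℝ) / ((Nat.factorial (n - k) : ℝ) * (Nat.factorial (k + 1) : ℝ))) *
    ((Nat.factorial (2 * n + 1 - k) : ℝ) / (2 * (Nat.factorial (2 * n + 1) : ℝ)))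

lemma c_zero (n : ℕ) : c n 0 = 1 / 2 := by
  have := Nat.factorial_pos n
  have := Nat.factorial_pos (2 * n + 1)
  simp only [c, Nat.sub_zero]
  field_simp
  ring

lemma c_mul_sub (n k : ℕ) (hk : k < n) :
    c n k * ((n : ℝ) - k) = c n (k + 1) * ((k : ℝ) + 2) * (2 * (n : ℝ) - k + 1) := by
  obtain ⟨m, rfl⟩ : ∃ m, n = k + 1 + m := ⟨n - (k + 1), by omega⟩
  have := Nat.factorial_pos m
  have := Nat.factorial_pos (k + 1)
  have := Nat.factorial_pos (k + 2 * m + 2)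
  have := Nat.factorial_pos (2 * (k + 1 + m) + 1)
  simp only [c, show k + 1 + m - k = m + 1 by omega, show k + 1 + m - (k + 1) = m by omega,
    show 2 * (k + 1 + m) + 1 - k = k + 2 * m + 2 + 1 by omega,
    show 2 * (k + 1 + m) + 1 - (k + 1) = k + 2 * m + 2 by omega,
    Nat.factorial_succ m, Nat.factorial_succ (k + 2 * m + 2), Nat.factorial_succ (k + 1)]
  push_cast
  field_simp
  ring

noncomputable def splineWeight (n k : ℕ) : ℝ :=
  c n k * ((k : ℝ) + 1) * (1 + ((n : ℝ) + 1) / ((n : ℝ) - (k : ℝ) + 1))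

lemma splineWeight_zero (n : ℕ) : splineWeight n 0 = 1 := by
  have : (n : ℝ) + 1 ≠ 0 := by positivity
  simp only [splineWeight, c_zero, CharP.cast_eq_zero, sub_zero, div_self this]
  norm_num

lemma splineWeight_succ (n k : ℕ) (hk : k < n) : splineWeight n (k + 1) = c n k := by
  have hnk : (n : ℝ) - k ≠ 0 := sub_ne_zero.2 (by exact_mod_cast hk.ne')
  have h := c_mul_sub n k hk
  rw [splineWeight, show (n : ℝ) - ((k + 1 : ℕ) : ℝ) + 1 = n - k by push_cast; ring]
  field_simp
  push_cast
  linear_combination -h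

lemma c_sum_shift_telescope (n : ℕ) (u : ℝ) (b : ℕ → ℝ) :
    ∑ k ∈ Finset.range (n + 1), c n k * u ^ (k + 1) * ((-1) ^ k * b (k + 1)) =
      b 0 - ∑ k ∈ Finset.range (n + 1), (-1) ^ k * splineWeight n k * u ^ k * b k +
        c n n * u ^ (n + 1) * ((-1) ^ n * b (n + 1)) := by
  rw [Finset.sum_range_succ, Finset.sum_range_succ', splineWeight_zero]
  have : ∀ k ∈ Finset.range n, c n k * u ^ (k + 1) * ((-1) ^ k * b (k + 1)) =
      -((-1) ^ (k + 1) * splineWeight n (k + 1) * u ^ (k + 1) * b (k + 1)) := by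
    intro k hk
    rw [splineWeight_succ n k (Finset.mem_range.1 hk)]
    ring
  rw [Finset.sum_congr rfl this, Finset.sum_neg_distrib]
  ring

lemma spline_deriv_sum_eq (n : ℕ) (u : ℝ) (a b : ℕ → ℝ) :
    b 0 - ∑ k ∈ Finset.range (n + 1), (c n k * (((k : ℝ) + 1) * u ^ k) * (a k + (-1) ^ k * b k) +
        c n k * u ^ (k + 1) * ((-1) ^ k * b (k + 1))) =
      -(∑ k ∈ Finset.range (n + 1), c n k * (k + 1) * u ^ k *
          (a k + (-1 : ℝ) ^ (k + 1) * (((n : ℝ) + 1) / ((n : ℝ) - (k : ℝ) + 1)) * b k)) +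
        c n n * (-1 : ℝ) ^ (n + 1) * u ^ (n + 1) * b (n + 1) := by
  rw [Finset.sum_add_distrib, c_sum_shift_telescope, ← Finset.sum_neg_distrib]
  have : ∀ k ∈ Finset.range (n + 1),
      -(c n k * (k + 1) * u ^ k *
        (a k + (-1 : ℝ) ^ (k + 1) * (((n : ℝ) + 1) / ((n : ℝ) - (k : ℝ) + 1)) * b k)) =
      -(c n k * (((k : ℝ) + 1) * u ^ k) * (a k + (-1) ^ k * b k)) +
        (-1) ^ k * splineWeight n k * u ^ k * b k := by
    intro k _
    rw [splineWeight]
    ring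
  rw [Finset.sum_congr rfl this, Finset.sum_add_distrib, Finset.sum_neg_distrib]
  ring

lemma hasDerivAt_iteratedDeriv {f : ℝ → ℝ} {m : WithTop ℕ∞} {k : ℕ} (hf : ContDiff ℝ m f)
    (hk : k < m) (x : ℝ) : HasDerivAt (iteratedDeriv k f) (iteratedDeriv (k + 1) f x) x := by
  rw [iteratedDeriv_succ]
  exact (hf.differentiable_iteratedDeriv k hk x).hasDerivAt

lemma hasDerivAt_sum_pow_mul_iteratedDeriv {f : ℝ → ℝ} {n : ℕ} (hf : ContDiff ℝ (n + 1) f)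
    (γ : ℕ → ℝ) (α x : ℝ) :
    HasDerivAt (fun y ↦ ∑ k ∈ Finset.range (n + 1),
        γ k * (y - α) ^ (k + 1) * (iteratedDeriv k f α + (-1) ^ k * iteratedDeriv k f y))
      (∑ k ∈ Finset.range (n + 1),
        (γ k * (((k : ℝ) + 1) * (x - α) ^ k) *
            (iteratedDeriv k f α + (-1) ^ k * iteratedDeriv k f x) +
          γ k * (x - α) ^ (k + 1) * ((-1) ^ k * iteratedDeriv (k + 1) f x))) x := by
  refine HasDerivAt.fun_sum fun k hk ↦ HasDerivAt.mul ?_ ?_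
  · simpa using (((hasDerivAt_id x).sub_const α).pow (k + 1)).const_mul (γ k)
  · have hk : (k : WithTop ℕ∞) < n + 1 := by exact_mod_cast Finset.mem_range.1 hk
    exact ((hasDerivAt_iteratedDeriv hf hk x).const_mul _).const_add _

/-- Derivative of the remainder of the two-point spline based integral approximation. -/
theorem spline_remainder_deriv
    (n : ℕ) (f : ℝ → ℝ) (hf : ContDiff ℝ (n + 1) f) (α : ℝ)
    (R : ℝ → ℝ)
    (hR : ∀ x, R x = (∫ l in α..x, f l) -
      ∑ k ∈ Finset.range (n + 1), c n k * (x - α) ^ (k + 1) *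
        (iteratedDeriv k f α + (-1 : ℝ) ^ k * iteratedDeriv k f x)) :
    ∀ x : ℝ, HasDerivAt R
      (-(∑ k ∈ Finset.range (n + 1), c n k * (k + 1) * (x - α) ^ k *
          (iteratedDeriv k f α + (-1 : ℝ) ^ (k + 1) *
            (((n : ℝ) + 1) / ((n : ℝ) - (k : ℝ) + 1)) * iteratedDeriv k f x)) +
        c n n * (-1 : ℝ) ^ (n + 1) * (x - α) ^ (n + 1) * iteratedDeriv (n + 1) f x) x := by
  intro x
  rw [show R = _ from funext hR,
    ← spline_deriv_sum_eq n (x - α) (iteratedDeriv · f α) (iteratedDeriv · f x), iteratedDeriv_zero]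
  exact (hf.continuous.integral_hasStrictDerivAt α x).hasDerivAt.sub
    (hasDerivAt_sum_pow_mul_iteratedDeriv hf (c n) α x)
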